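/- Let (Ω,𝔉,P) be a probability space with a filtration (𝔉_t)_{t=1}^{n+1}, let A* : Ω → [k] be measurable, and for each t ∈ {1,…,n+1} let P*_t be the Δ^{k−1}-valued random vector with coordinates P*_{t,a} = P(A* = a | 𝔉_t). Let F : ℝ^k → ℝ be convex with diam_F(Δ^{k−1}) < ∞, and let Δ_1,…,Δ_n be integrable real random variables. Suppose there exist constants α, β ≥ 0 such that for every t ∈ {1,…,n}, E[Δ_t | 𝔉_t] ≤ α + sqrt(β · E[D_F(P*_{t+1},P*_t) | 𝔉_t]) almost surely. Then E[∑_{t=1}^n Δ_t] ≤ α n + sqrt(n β · diam_F(Δ^{k−1})). -/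

import Mathlib

open MeasureTheory
open scoped BigOperators

noncomputable section

/-- The one-sided directional derivative of a convex function `F` at `y` in the
direction `v`: for convex `F` the difference quotients are monotone in `h`, so it
equals the infimum over `h > 0`. -/
def dirDeriv {k : ℕ} (F : (Fin k → ℝ) → ℝ) (y v : Fin k → ℝ) : ℝ :=
  sInf ((fun h : ℝ => (F (y + h • v) - F y) / h) '' Set.Ioi 0)

/-- The Bregman divergence of a convex function `F`. -/
def bregman {k : ℕ} (F : (Fin k → ℝ) → ℝ) (x y : Fin k → ℝ) : ℝ :=
  F x - F y - dirDeriv F y (x - y)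

/-- The diameter of a set with respect to `F`: `sup_{x,y ∈ D} (F x − F y)`. -/
def bregDiam {k : ℕ} (F : (Fin k → ℝ) → ℝ) (D : Set (Fin k → ℝ)) : ℝ :=
  sSup {z | ∃ x ∈ D, ∃ y ∈ D, z = F x - F y}

/-- The posterior distribution of `A*` given a `σ`-algebra: the vector of conditional
probabilities `P(A* = a | m')`. -/
def posterior {Ω : Type*} {mΩ : MeasurableSpace Ω} (P : Measure Ω) {k : ℕ}
    (Astar : Ω → Fin k) (m' : MeasurableSpace Ω) : Ω → Fin k → ℝ :=
  fun ω a => (P[fun ω' => if Astar ω' = a then (1 : ℝ) else 0 | m']) ω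

/-!
The posterior process `P*_t` is a martingale with values in the simplex. By conditional Jensen,
each difference quotient `(F (P*_t + s (P*_{t+1} - P*_t)) - F (P*_t)) / s`, `0 < s ≤ 1`, has
nonnegative mean, and by dominated convergence so does its limit `∇_{P*_{t+1} - P*_t} F (P*_t)`.
Hence `E[D_F(P*_{t+1}, P*_t)] ≤ E[F (P*_{t+1})] - E[F (P*_t)]`, and these telescope to at most
`diam_F(Δ^{k-1})`. Integrating the hypothesis and using concavity of `√` gives
`E[Δ_t] ≤ α + √(β E[D_F(P*_{t+1}, P*_t)])`; Cauchy–Schwarz in `t` finishes the proof.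
-/

open Filter Topology Set

def diffQuot {k : ℕ} (F : (Fin k → ℝ) → ℝ) (y v : Fin k → ℝ) (h : ℝ) : ℝ :=
  (F (y + h • v) - F y) / h

namespace ConvexOn

variable {k : ℕ} {F : (Fin k → ℝ) → ℝ}

theorem comp_line (hF : ConvexOn ℝ univ F) (y v : Fin k → ℝ) :
    ConvexOn ℝ univ fun h : ℝ => F (y + h • v) := by
  have hline : (fun h : ℝ => F (y + h • v)) = F ∘ AffineMap.lineMap y (y + v) := by
    ext h
    simp [AffineMap.lineMap_apply, add_comm]
  simpa [hline] using hF.comp_affineMap (AffineMap.lineMap y (y + v))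

theorem monotoneOn_diffQuot (hF : ConvexOn ℝ univ F) (y v : Fin k → ℝ) :
    MonotoneOn (diffQuot F y v) (Ioi 0) := fun h₁ (h₁0 : 0 < h₁) h₂ (h₂0 : 0 < h₂) h12 => by
  simpa [diffQuot] using (hF.comp_line y v).secant_mono (a := 0) trivial trivial trivial
    h₁0.ne' h₂0.ne' h12

theorem sub_le_diffQuot (hF : ConvexOn ℝ univ F) (y v : Fin k → ℝ) {h : ℝ} (h0 : 0 < h) :
    F y - F (y - v) ≤ diffQuot F y v h := by
  have := (hF.comp_line y v).secant_mono (a := 0) (x := -1) trivial trivial trivial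
    (by norm_num) h0.ne' (by linarith)
  simpa [diffQuot, sub_eq_add_neg, div_neg] using this

theorem diffQuot_le_sub (hF : ConvexOn ℝ univ F) (y v : Fin k → ℝ) {h : ℝ} (h0 : 0 < h)
    (h1 : h ≤ 1) : diffQuot F y v h ≤ F (y + v) - F y := by
  simpa [diffQuot] using hF.monotoneOn_diffQuot y v h0 (mem_Ioi.2 one_pos) h1

theorem bddBelow_diffQuot (hF : ConvexOn ℝ univ F) (y v : Fin k → ℝ) :
    BddBelow (diffQuot F y v '' Ioi 0) :=
  ⟨F y - F (y - v), by rintro _ ⟨h, h0, rfl⟩; exact hF.sub_le_diffQuot y v h0⟩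

theorem tendsto_diffQuot (hF : ConvexOn ℝ univ F) (y v : Fin k → ℝ) :
    Tendsto (diffQuot F y v) (𝓝[>] 0) (𝓝 (dirDeriv F y v)) :=
  (hF.monotoneOn_diffQuot y v).tendsto_nhdsGT (hF.bddBelow_diffQuot y v)

theorem sub_le_dirDeriv (hF : ConvexOn ℝ univ F) (y v : Fin k → ℝ) :
    F y - F (y - v) ≤ dirDeriv F y v :=
  le_csInf (nonempty_Ioi.image _) (by rintro _ ⟨h, h0, rfl⟩; exact hF.sub_le_diffQuot y v h0)

theorem dirDeriv_le_sub (hF : ConvexOn ℝ univ F) (y v : Fin k → ℝ) :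
    dirDeriv F y v ≤ F (y + v) - F y :=
  (csInf_le (hF.bddBelow_diffQuot y v) ⟨1, mem_Ioi.2 one_pos, rfl⟩).trans
    (hF.diffQuot_le_sub y v one_pos le_rfl)

theorem bregman_nonneg (hF : ConvexOn ℝ univ F) (x y : Fin k → ℝ) : 0 ≤ bregman F x y := by
  have := hF.dirDeriv_le_sub y (x - y)
  rw [add_sub_cancel] at this
  rw [bregman]
  linarith

theorem continuous_of_univ (hF : ConvexOn ℝ univ F) : Continuous F :=
  continuousOn_univ.1 (hF.continuousOn isOpen_univ)

theorem abs_diffQuot_sub_le (hF : ConvexOn ℝ univ F) (x y : Fin k → ℝ) {s : ℝ}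
    (hs : s ∈ Ioc 0 1) :
    |diffQuot F y (x - y) s| ≤ |F y - F (y - (x - y))| + |F x - F y| := by
  have hup := hF.diffQuot_le_sub y (x - y) hs.1 hs.2
  rw [add_sub_cancel] at hup
  exact (abs_le_max_abs_abs (hF.sub_le_diffQuot y (x - y) hs.1) hup).trans
    (max_le_add_of_nonneg (abs_nonneg _) (abs_nonneg _))

end ConvexOn

section Integrals

variable {Ω : Type*} {m mΩ : MeasurableSpace Ω} {μ : Measure Ω} [IsFiniteMeasure μ]

theorem Continuous.integrable_comp_of_ae_norm_le {E G : Type*} [NormedAddCommGroup E]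
    [ProperSpace E] [NormedAddCommGroup G] {F : E → G} (hF : Continuous F) {f : Ω → E}
    (hf : AEStronglyMeasurable f μ) {R : ℝ} (hR : ∀ᵐ ω ∂μ, ‖f ω‖ ≤ R) :
    Integrable (fun ω => F (f ω)) μ := by
  obtain ⟨C, hC⟩ :=
    (isCompact_closedBall (0 : E) R).exists_bound_of_continuousOn hF.continuousOn
  refine .of_bound (hF.comp_aestronglyMeasurable hf) C ?_
  filter_upwards [hR] with ω hω
  exact hC _ (mem_closedBall_zero_iff.2 hω)

variable {E : Type*} [NormedAddCommGroup E] [NormedSpace ℝ E] [CompleteSpace E]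

theorem ConvexOn.integral_comp_le_of_condExp_eq {φ : E → ℝ} (hφ : ConvexOn ℝ univ φ)
    (hφc : LowerSemicontinuous φ) (hm : m ≤ mΩ) {X Y : Ω → E} (hY : Integrable Y μ)
    (hφX : Integrable (fun ω => φ (X ω)) μ) (hφY : Integrable (fun ω => φ (Y ω)) μ)
    (hYX : μ[Y|m] =ᵐ[μ] X) :
    ∫ ω, φ (X ω) ∂μ ≤ ∫ ω, φ (Y ω) ∂μ := by
  have hjensen : (fun ω => φ (X ω)) ≤ᵐ[μ] μ[fun ω => φ (Y ω)|m] := by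
    filter_upwards [hφ.map_condExp_le_univ hm hφc hY hφY, hYX] with ω hω hωX
    rw [← hωX]
    exact hω
  calc ∫ ω, φ (X ω) ∂μ ≤ ∫ ω, (μ[fun ω => φ (Y ω)|m]) ω ∂μ :=
        integral_mono_ae hφX integrable_condExp hjensen
    _ = ∫ ω, φ (Y ω) ∂μ := integral_condExp hm

theorem condExp_add_smul_sub_of_condExp_eq (hm : m ≤ mΩ) {X Y : Ω → E}
    (hXm : StronglyMeasurable[m] X) (hX : Integrable X μ) (hY : Integrable Y μ)
    (hYX : μ[Y|m] =ᵐ[μ] X) (s : ℝ) :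
    μ[X + s • (Y - X)|m] =ᵐ[μ] X := by
  have hXX : μ[X|m] = X := condExp_of_stronglyMeasurable hm hXm hX
  filter_upwards [condExp_add hX ((hY.sub hX).smul s) m, condExp_smul s (Y - X) m,
    condExp_sub hY hX m, hYX] with ω h₁ h₂ h₃ h₄
  simp [h₁, h₂, h₃, h₄, hXX]

end Integrals

namespace ConvexOn

variable {k : ℕ} {F : (Fin k → ℝ) → ℝ}
variable {Ω : Type*} {m mΩ : MeasurableSpace Ω} {μ : Measure Ω} {X Y : Ω → Fin k → ℝ} {R : ℝ}

theorem aestronglyMeasurable_diffQuot_comp (hF : ConvexOn ℝ univ F)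
    (hX : AEStronglyMeasurable X μ) (hY : AEStronglyMeasurable Y μ) (s : ℝ) :
    AEStronglyMeasurable (fun ω => diffQuot F (X ω) (Y ω) s) μ := by
  have hFc := hF.continuous_of_univ
  unfold diffQuot
  fun_prop

theorem aestronglyMeasurable_dirDeriv_comp (hF : ConvexOn ℝ univ F)
    (hX : AEStronglyMeasurable X μ) (hY : AEStronglyMeasurable Y μ) :
    AEStronglyMeasurable (fun ω => dirDeriv F (X ω) (Y ω)) μ :=
  aestronglyMeasurable_of_tendsto_ae (𝓝[>] 0) (hF.aestronglyMeasurable_diffQuot_comp hX hY)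
    (ae_of_all _ fun ω => hF.tendsto_diffQuot (X ω) (Y ω))

variable [IsFiniteMeasure μ]

/-- Integrable lower and upper bounds for `diffQuot F X (Y - X) s`, `s ∈ (0, 1]`, and for
`dirDeriv F X (Y - X)`. -/
theorem integrable_envelopes_of_ae_norm_le (hF : ConvexOn ℝ univ F)
    (hX : AEStronglyMeasurable X μ) (hY : AEStronglyMeasurable Y μ)
    (hXR : ∀ᵐ ω ∂μ, ‖X ω‖ ≤ R) (hYR : ∀ᵐ ω ∂μ, ‖Y ω‖ ≤ R) :
    Integrable (fun ω => F (X ω) - F (X ω - (Y ω - X ω))) μ ∧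
      Integrable (fun ω => F (Y ω) - F (X ω)) μ := by
  have hFc := hF.continuous_of_univ
  have hFX := hFc.integrable_comp_of_ae_norm_le hX hXR
  refine ⟨hFX.sub (hFc.integrable_comp_of_ae_norm_le (hX.sub (hY.sub hX)) (R := 3 * R) ?_),
    (hFc.integrable_comp_of_ae_norm_le hY hYR).sub hFX⟩
  filter_upwards [hXR, hYR] with ω hXω hYω
  linarith [norm_sub_le (X ω) (Y ω - X ω), norm_sub_le (Y ω) (X ω)]

theorem integrable_dirDeriv_comp_of_ae_norm_le (hF : ConvexOn ℝ univ F)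
    (hX : AEStronglyMeasurable X μ) (hY : AEStronglyMeasurable Y μ)
    (hXR : ∀ᵐ ω ∂μ, ‖X ω‖ ≤ R) (hYR : ∀ᵐ ω ∂μ, ‖Y ω‖ ≤ R) :
    Integrable (fun ω => dirDeriv F (X ω) (Y ω - X ω)) μ := by
  obtain ⟨hlow, hup⟩ := hF.integrable_envelopes_of_ae_norm_le hX hY hXR hYR
  refine integrable_of_le_of_le (hF.aestronglyMeasurable_dirDeriv_comp hX (hY.sub hX))
    (ae_of_all _ fun ω => hF.sub_le_dirDeriv _ _) (ae_of_all _ fun ω => ?_) hlow hup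
  simpa using hF.dirDeriv_le_sub (X ω) (Y ω - X ω)

theorem integral_dirDeriv_nonneg_of_condExp_eq (hF : ConvexOn ℝ univ F) (hm : m ≤ mΩ)
    (hXm : StronglyMeasurable[m] X) (hY : AEStronglyMeasurable Y μ)
    (hXR : ∀ᵐ ω ∂μ, ‖X ω‖ ≤ R) (hYR : ∀ᵐ ω ∂μ, ‖Y ω‖ ≤ R) (hYX : μ[Y|m] =ᵐ[μ] X) :
    0 ≤ ∫ ω, dirDeriv F (X ω) (Y ω - X ω) ∂μ := by
  have hFc := hF.continuous_of_univ
  have hX : AEStronglyMeasurable X μ := (hXm.mono hm).aestronglyMeasurable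
  have hFX := hFc.integrable_comp_of_ae_norm_le hX hXR
  have hslope : ∀ s ∈ Ioc (0 : ℝ) 1, 0 ≤ ∫ ω, diffQuot F (X ω) (Y ω - X ω) s ∂μ := by
    rintro s ⟨hs0, hs1⟩
    have hZR : ∀ᵐ ω ∂μ, ‖(X + s • (Y - X)) ω‖ ≤ R := by
      filter_upwards [hXR, hYR] with ω hXω hYω
      simpa using (convex_closedBall (0 : Fin k → ℝ) R).add_smul_sub_mem
        (mem_closedBall_zero_iff.2 hXω) (mem_closedBall_zero_iff.2 hYω) ⟨hs0.le, hs1⟩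
    have hFZ := hFc.integrable_comp_of_ae_norm_le (hX.add ((hY.sub hX).const_smul s)) hZR
    have hle := hF.integral_comp_le_of_condExp_eq hFc.lowerSemicontinuous hm
      (.of_bound (hX.add ((hY.sub hX).const_smul s)) R hZR) hFX hFZ
      (condExp_add_smul_sub_of_condExp_eq hm hXm (.of_bound hX R hXR) (.of_bound hY R hYR)
        hYX s)
    have hmean : ∫ ω, diffQuot F (X ω) (Y ω - X ω) s ∂μ
        = (∫ ω, F ((X + s • (Y - X)) ω) ∂μ - ∫ ω, F (X ω) ∂μ) / s := by
      rw [← integral_sub hFZ hFX, ← integral_div]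
      rfl
    rw [hmean]
    exact div_nonneg (sub_nonneg.2 hle) hs0.le
  obtain ⟨hlow, hup⟩ := hF.integrable_envelopes_of_ae_norm_le hX hY hXR hYR
  have hdom : ∀ᶠ s in 𝓝[>] (0 : ℝ), ∀ᵐ ω ∂μ, ‖diffQuot F (X ω) (Y ω - X ω) s‖
      ≤ |F (X ω) - F (X ω - (Y ω - X ω))| + |F (Y ω) - F (X ω)| :=
    Filter.mem_of_superset (Ioc_mem_nhdsGT one_pos) fun s hs =>
      ae_of_all _ fun ω => hF.abs_diffQuot_sub_le _ _ hs
  have hlim := tendsto_integral_filter_of_dominated_convergence _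
    (.of_forall fun s => hF.aestronglyMeasurable_diffQuot_comp hX (hY.sub hX) s) hdom
    (hlow.abs.add hup.abs) (ae_of_all _ fun ω => hF.tendsto_diffQuot (X ω) (Y ω - X ω))
  exact ge_of_tendsto hlim (Filter.mem_of_superset (Ioc_mem_nhdsGT one_pos) hslope)

theorem integral_bregman_le_of_condExp_eq (hF : ConvexOn ℝ univ F) (hm : m ≤ mΩ)
    (hXm : StronglyMeasurable[m] X) (hY : AEStronglyMeasurable Y μ)
    (hXR : ∀ᵐ ω ∂μ, ‖X ω‖ ≤ R) (hYR : ∀ᵐ ω ∂μ, ‖Y ω‖ ≤ R) (hYX : μ[Y|m] =ᵐ[μ] X) :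
    ∫ ω, bregman F (Y ω) (X ω) ∂μ ≤ ∫ ω, F (Y ω) ∂μ - ∫ ω, F (X ω) ∂μ := by
  have hX : AEStronglyMeasurable X μ := (hXm.mono hm).aestronglyMeasurable
  have hFc := hF.continuous_of_univ
  have hsplit : ∫ ω, bregman F (Y ω) (X ω) ∂μ = ∫ ω, F (Y ω) ∂μ - ∫ ω, F (X ω) ∂μ
      - ∫ ω, dirDeriv F (X ω) (Y ω - X ω) ∂μ := by
    rw [← integral_sub (hFc.integrable_comp_of_ae_norm_le hY hYR)
      (hFc.integrable_comp_of_ae_norm_le hX hXR),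
      ← integral_sub (hF.integrable_envelopes_of_ae_norm_le hX hY hXR hYR).2
      (hF.integrable_dirDeriv_comp_of_ae_norm_le hX hY hXR hYR)]
    rfl
  linarith [hF.integral_dirDeriv_nonneg_of_condExp_eq hm hXm hY hXR hYR hYX]

end ConvexOn

section Telescoping

variable {k : ℕ} {F : (Fin k → ℝ) → ℝ} {Ω : Type*} {mΩ : MeasurableSpace Ω} {μ : Measure Ω}
  [IsProbabilityMeasure μ]

theorem bddAbove_sub_of_isCompact (hF : Continuous F) {D : Set (Fin k → ℝ)}
    (hD : IsCompact D) :
    BddAbove {z | ∃ x ∈ D, ∃ y ∈ D, z = F x - F y} := by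
  obtain ⟨C, hC⟩ := hD.exists_bound_of_continuousOn hF.continuousOn
  refine ⟨2 * C, ?_⟩
  rintro _ ⟨x, hx, y, hy, rfl⟩
  linarith [abs_le.1 (hC x hx), abs_le.1 (hC y hy)]

theorem ConvexOn.sum_integral_bregman_le_bregDiam (hF : ConvexOn ℝ univ F)
    {𝔉 : Filtration ℕ mΩ} {X : ℕ → Ω → Fin k → ℝ} (hX : Martingale X 𝔉 μ)
    {D : Set (Fin k → ℝ)} (hD : IsCompact D) (hXD : ∀ t, ∀ᵐ ω ∂μ, X t ω ∈ D) (n : ℕ) :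
    ∑ t ∈ Finset.range n, ∫ ω, bregman F (X (t + 1) ω) (X t ω) ∂μ ≤ bregDiam F D := by
  have hFc := hF.continuous_of_univ
  obtain ⟨R, hR⟩ := hD.isBounded.subset_closedBall 0
  have hXR : ∀ t, ∀ᵐ ω ∂μ, ‖X t ω‖ ≤ R := fun t => (hXD t).mono fun ω hω =>
    mem_closedBall_zero_iff.1 (hR hω)
  have hXm : ∀ t, AEStronglyMeasurable (X t) μ := fun t =>
    ((hX.stronglyMeasurable t).mono (𝔉.le t)).aestronglyMeasurable
  have hFX : ∀ t, Integrable (fun ω => F (X t ω)) μ := fun t =>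
    hFc.integrable_comp_of_ae_norm_le (hXm t) (hXR t)
  calc ∑ t ∈ Finset.range n, ∫ ω, bregman F (X (t + 1) ω) (X t ω) ∂μ
      ≤ ∑ t ∈ Finset.range n, (∫ ω, F (X (t + 1) ω) ∂μ - ∫ ω, F (X t ω) ∂μ) :=
        Finset.sum_le_sum fun t _ => hF.integral_bregman_le_of_condExp_eq (𝔉.le t)
          (hX.stronglyMeasurable t) (hXm (t + 1)) (hXR t) (hXR (t + 1))
          (hX.condExp_ae_eq (Nat.le_succ t))
    _ = ∫ ω, (F (X n ω) - F (X 0 ω)) ∂μ := by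
        rw [Finset.sum_range_sub (fun t => ∫ ω, F (X t ω) ∂μ), integral_sub (hFX n) (hFX 0)]
    _ ≤ ∫ _, bregDiam F D ∂μ := by
        refine integral_mono_ae ((hFX n).sub (hFX 0)) (integrable_const _) ?_
        filter_upwards [hXD n, hXD 0] with ω hn h0
        exact le_csSup (bddAbove_sub_of_isCompact hFc hD) ⟨_, hn, _, h0, rfl⟩
    _ = bregDiam F D := by simp

end Telescoping

section Posterior

variable {Ω : Type*} {mΩ : MeasurableSpace Ω} {P : Measure Ω} {k : ℕ} {Astar : Ω → Fin k}

/-- The one-hot encoding of `A*`: `posterior` is, coordinatewise, its conditional expectation. -/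
def actionIndicator (Astar : Ω → Fin k) (ω : Ω) : Fin k → ℝ :=
  fun a => if Astar ω = a then 1 else 0

theorem actionIndicator_mem_stdSimplex (ω : Ω) :
    actionIndicator Astar ω ∈ stdSimplex ℝ (Fin k) :=
  ite_eq_mem_stdSimplex ℝ (Astar ω)

theorem stronglyMeasurable_posterior (m : MeasurableSpace Ω) :
    StronglyMeasurable[m] (posterior P Astar m) :=
  (measurable_pi_lambda (posterior P Astar m) fun _ =>
    stronglyMeasurable_condExp.measurable).stronglyMeasurable

variable [IsFiniteMeasure P]

theorem integrable_actionIndicator (hA : Measurable Astar) :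
    Integrable (actionIndicator Astar) P :=
  .of_bound ((measurable_of_finite (fun i a => if i = a then (1 : ℝ) else 0)).comp
    hA).aestronglyMeasurable 1 (ae_of_all _ fun ω =>
      mem_closedBall_zero_iff.1
        (stdSimplex_subset_closedBall (actionIndicator_mem_stdSimplex ω)))

theorem posterior_ae_eq_condExp (hA : Measurable Astar) (m : MeasurableSpace Ω) :
    posterior P Astar m =ᵐ[P] P[actionIndicator Astar|m] := by
  filter_upwards [ae_all_iff.2 fun a =>
    (ContinuousLinearMap.proj a).comp_condExp_comm (integrable_actionIndicator hA) (m := m)]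
    with ω hω
  funext a
  exact (hω a).symm

theorem posterior_mem_stdSimplex (hA : Measurable Astar) {m : MeasurableSpace Ω}
    (hm : m ≤ mΩ) :
    ∀ᵐ ω ∂P, posterior P Astar m ω ∈ stdSimplex ℝ (Fin k) := by
  filter_upwards [posterior_ae_eq_condExp hA m, Convex.condExp_mem hm
    (integrable_actionIndicator hA) (isClosed_stdSimplex ℝ _) (convex_stdSimplex ℝ _)
    (ae_of_all _ actionIndicator_mem_stdSimplex)] with ω hω hmem
  rwa [hω]

theorem martingale_posterior (hA : Measurable Astar) (𝔉 : Filtration ℕ mΩ) :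
    Martingale (fun t => posterior P Astar (𝔉 t)) 𝔉 P :=
  (martingale_condExp (actionIndicator Astar) 𝔉 P).congr
    (fun t => stronglyMeasurable_posterior (𝔉 t))
    (fun t => (posterior_ae_eq_condExp hA (𝔉 t)).symm)

end Posterior

theorem Real.sqrt_le_one_add_abs (x : ℝ) : √x ≤ 1 + |x| := by
  rcases le_total x 0 with hx | hx
  · rw [Real.sqrt_eq_zero'.2 hx]
    positivity
  · nlinarith [Real.sq_sqrt hx, sq_nonneg (√x - 1), abs_of_nonneg hx]

theorem Real.sum_sqrt_le_sqrt_card_mul_sum {ι : Type*} (s : Finset ι) {f : ι → ℝ}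
    (hf : ∀ i, 0 ≤ f i) : ∑ i ∈ s, √(f i) ≤ √(s.card * ∑ i ∈ s, f i) := by
  simpa [Real.sqrt_mul (Nat.cast_nonneg _)] using
    Real.sum_sqrt_mul_sqrt_le s (f := fun _ => 1) (fun _ => zero_le_one) hf

section Regret

variable {Ω : Type*} {m mΩ : MeasurableSpace Ω} {μ : Measure Ω}

theorem MeasureTheory.Integrable.sqrt [IsFiniteMeasure μ] {g : Ω → ℝ} (hg : Integrable g μ) :
    Integrable (fun ω => √(g ω)) μ :=
  ((integrable_const 1).add hg.abs).mono' (by fun_prop) (ae_of_all _ fun ω => by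
    simpa [abs_of_nonneg (Real.sqrt_nonneg _)] using Real.sqrt_le_one_add_abs (g ω))

variable [IsProbabilityMeasure μ]

theorem integral_sqrt_le_sqrt_integral {g : Ω → ℝ} (hg : Integrable g μ) (hg0 : 0 ≤ᵐ[μ] g) :
    ∫ ω, √(g ω) ∂μ ≤ √(∫ ω, g ω ∂μ) :=
  Real.strictConcaveOn_sqrt.concaveOn.le_map_integral Real.continuous_sqrt.continuousOn
    isClosed_Ici hg0 hg hg.sqrt

theorem integral_le_add_sqrt_of_condExp_le (hm : m ≤ mΩ) {Δ B : Ω → ℝ} {α β : ℝ}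
    (hB0 : 0 ≤ᵐ[μ] B) (hβ : 0 ≤ β)
    (hΔB : ∀ᵐ ω ∂μ, (μ[Δ|m]) ω ≤ α + √(β * (μ[B|m]) ω)) :
    ∫ ω, Δ ω ∂μ ≤ α + √(β * ∫ ω, B ω ∂μ) := by
  have hβB : Integrable (fun ω => β * (μ[B|m]) ω) μ := integrable_condExp.const_mul β
  calc ∫ ω, Δ ω ∂μ = ∫ ω, (μ[Δ|m]) ω ∂μ := (integral_condExp hm).symm
    _ ≤ ∫ ω, (α + √(β * (μ[B|m]) ω)) ∂μ :=
        integral_mono_ae integrable_condExp ((integrable_const α).add hβB.sqrt) hΔB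
    _ = α + ∫ ω, √(β * (μ[B|m]) ω) ∂μ := by
        rw [integral_add (integrable_const α) hβB.sqrt, integral_const]
        simp
    _ ≤ α + √(∫ ω, β * (μ[B|m]) ω ∂μ) := by
        gcongr
        exact integral_sqrt_le_sqrt_integral hβB
          ((condExp_nonneg hB0).mono fun ω hω => mul_nonneg hβ hω)
    _ = α + √(β * ∫ ω, B ω ∂μ) := by rw [integral_const_mul, integral_condExp hm]

theorem integral_sum_le_of_condExp_le_add_sqrt (m : ℕ → MeasurableSpace Ω) (hm : ∀ t, m t ≤ mΩ)
    {n : ℕ} {Δ B : ℕ → Ω → ℝ} {α β D : ℝ} (hΔ : ∀ t < n, Integrable (Δ t) μ)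
    (hB0 : ∀ t, 0 ≤ᵐ[μ] B t) (hβ : 0 ≤ β)
    (hBD : ∑ t ∈ Finset.range n, ∫ ω, B t ω ∂μ ≤ D)
    (hΔB : ∀ t < n, ∀ᵐ ω ∂μ, (μ[Δ t|m t]) ω ≤ α + √(β * (μ[B t|m t]) ω)) :
    ∫ ω, ∑ t ∈ Finset.range n, Δ t ω ∂μ ≤ α * n + √(n * β * D) := by
  have hb0 : ∀ t, 0 ≤ β * ∫ ω, B t ω ∂μ := fun t => mul_nonneg hβ (integral_nonneg_of_ae (hB0 t))
  calc ∫ ω, ∑ t ∈ Finset.range n, Δ t ω ∂μ = ∑ t ∈ Finset.range n, ∫ ω, Δ t ω ∂μ :=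
        integral_finsetSum _ fun t ht => hΔ t (Finset.mem_range.1 ht)
    _ ≤ ∑ t ∈ Finset.range n, (α + √(β * ∫ ω, B t ω ∂μ)) :=
        Finset.sum_le_sum fun t ht => integral_le_add_sqrt_of_condExp_le (hm t) (hB0 t) hβ
          (hΔB t (Finset.mem_range.1 ht))
    _ = α * n + ∑ t ∈ Finset.range n, √(β * ∫ ω, B t ω ∂μ) := by
        simp [Finset.sum_add_distrib, mul_comm]
    _ ≤ α * n + √(n * ∑ t ∈ Finset.range n, β * ∫ ω, B t ω ∂μ) := by
        simpa using Real.sum_sqrt_le_sqrt_card_mul_sum (Finset.range n) hb0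
    _ ≤ α * n + √(n * β * D) := by
        rw [← Finset.mul_sum, mul_assoc]
        gcongr

end Regret

theorem posterior_bregman_regret_bound_general {Ω : Type*} {mΩ : MeasurableSpace Ω}
    {P : Measure Ω} [IsProbabilityMeasure P] {k n : ℕ}
    (𝔉 : Filtration ℕ mΩ)
    (Astar : Ω → Fin k) (hA : Measurable Astar)
    (F : (Fin k → ℝ) → ℝ) (hF : ConvexOn ℝ Set.univ F)
    (Δ : ℕ → Ω → ℝ) (hΔ : ∀ t < n, Integrable (Δ t) P)
    (α β : ℝ) (hβ : 0 ≤ β)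
    (hbound : ∀ t < n, ∀ᵐ ω ∂P,
      (P[Δ t | 𝔉 t]) ω ≤
        α + Real.sqrt (β *
          (P[fun ω' => bregman F (posterior P Astar (𝔉 (t + 1)) ω')
              (posterior P Astar (𝔉 t) ω') | 𝔉 t]) ω)) :
    ∫ ω, (∑ t ∈ Finset.range n, Δ t ω) ∂P ≤
      α * n + Real.sqrt (n * β * bregDiam F (stdSimplex ℝ (Fin k))) :=
  integral_sum_le_of_condExp_le_add_sqrt (fun t => 𝔉 t) 𝔉.le hΔ
    (fun _ => ae_of_all _ fun _ => hF.bregman_nonneg _ _) hβ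
    (hF.sum_integral_bregman_le_bregDiam (martingale_posterior hA 𝔉) (isCompact_stdSimplex ℝ _)
      (fun t => posterior_mem_stdSimplex hA (𝔉.le t)) n) hbound

/-- **Regret bound via the posterior martingale of the optimal action.**  If the
one-step regret is bounded by `α + √(β E_t[D_F(P*_{t+1}, P*_t)])` where `P*_t` is the
posterior distribution of the optimal action `A*` given `𝔉_t`, then the total expected
regret is at most `α n + √(n β diam_F(Δ^{k-1}))`. -/
theorem posterior_bregman_regret_bound {Ω : Type*} {mΩ : MeasurableSpace Ω}
    {P : Measure Ω} [IsProbabilityMeasure P] {k n : ℕ} (hk : 1 ≤ k)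
    (𝔉 : Filtration ℕ mΩ)
    (Astar : Ω → Fin k) (hA : Measurable Astar)
    (F : (Fin k → ℝ) → ℝ) (hF : ConvexOn ℝ Set.univ F)
    (hdiam : BddAbove
      {z | ∃ x ∈ stdSimplex ℝ (Fin k), ∃ y ∈ stdSimplex ℝ (Fin k), z = F x - F y})
    (Δ : ℕ → Ω → ℝ) (hΔ : ∀ t < n, Integrable (Δ t) P)
    (α β : ℝ) (hα : 0 ≤ α) (hβ : 0 ≤ β)
    (hbound : ∀ t < n, ∀ᵐ ω ∂P,
      (P[Δ t | 𝔉 t]) ω ≤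
        α + Real.sqrt (β *
          (P[fun ω' => bregman F (posterior P Astar (𝔉 (t + 1)) ω')
              (posterior P Astar (𝔉 t) ω') | 𝔉 t]) ω)) :
    ∫ ω, (∑ t ∈ Finset.range n, Δ t ω) ∂P ≤
      α * n + Real.sqrt (n * β * bregDiam F (stdSimplex ℝ (Fin k))) :=
  posterior_bregman_regret_bound_general 𝔉 Astar hA F hF Δ hΔ α β hβ hbound
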